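/- Consider the map π_t: ℝ^k → ℝ[x,y] sending v to Σ_{j=0}^{k-1} v_j x^{t(k-1-j)} y^{t j}, and the composition of two 1-D convolutions α_{w₂,s₂} ∘ α_{w₁,s₁} with filters w₁ ∈ ℝ^{k₁}, w₂ ∈ ℝ^{k₂} and strides s₁, s₂. Then the end-to-end filter v ∈ ℝ^{(k₂−1)s₁+k₁} of the composed convolution satisfies π₁(v) = π_{s₁}(w₂)·π₁(w₁), i.e., v_m = Σ_{(j,l): j s₁ + l = m, 0≤j<k₂, 0≤l<k₁} w₂,_j · w₁,_l. -/

import Mathlib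

/-- The 1-D convolution with filter `w` (size k) and stride `s`, acting on signals ℕ → ℝ:
(α_{w,s}(X))_i = Σ_{j=0}^{k-1} w_j X_{is+j}. -/
def conv1d (k : ℕ) (w : Fin k → ℝ) (s : ℕ) (X : ℕ → ℝ) : ℕ → ℝ :=
  fun i => ∑ j : Fin k, w j * X (i * s + j)

/-- π_t sends a filter v ∈ ℝ^k to the sparse homogeneous polynomial
Σ_j v_j x^{t(k-1-j)} y^{tj}, where x = X 0 and y = X 1. -/
noncomputable def filterPoly (t k : ℕ) (v : Fin k → ℝ) : MvPolynomial (Fin 2) ℝ :=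
  ∑ j : Fin k, MvPolynomial.C (v j) *
    MvPolynomial.X 0 ^ (t * (k - 1 - (j : ℕ))) * MvPolynomial.X 1 ^ (t * (j : ℕ))

/-!
Both identities are the same reindexing: the pairs `(j, l)` with `j < k₂`, `l < k₁` inject into
`Fin ((k₂ - 1) * s₁ + k₁)` via `(j, l) ↦ j * s₁ + l`, so any sum `∑ m, v m • g m` over the
end-to-end filter splits as `∑ j, ∑ l, (w₂ j * w₁ l) • g (j * s₁ + l)`. For the convolutions take
`g m = X (i * s₁ * s₂ + m)`; for the polynomials take `g m = x ^ (K - 1 - m) * y ^ m`, where the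
exponent of `x` splits as `s₁ * (k₂ - 1 - j) + (k₁ - 1 - l)`.
-/

open Finset MvPolynomial

section StridedIndex

variable {k₁ k₂ s : ℕ}

lemma mul_stride_add_lt (j : Fin k₂) (l : Fin k₁) : (j : ℕ) * s + l < (k₂ - 1) * s + k₁ := by
  have := Nat.mul_le_mul_right s (Nat.le_sub_one_of_lt j.isLt)
  omega

lemma sub_mul_stride_add (j : Fin k₂) (l : Fin k₁) :
    (k₂ - 1) * s + k₁ - 1 - ((j : ℕ) * s + l) = s * (k₂ - 1 - j) + (k₁ - 1 - l) := by
  have hj : (k₂ - 1 - j) * s + j * s = (k₂ - 1) * s := by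
    rw [← Nat.add_mul, Nat.sub_add_cancel (Nat.le_sub_one_of_lt j.isLt)]
  have hl := l.isLt
  rw [Nat.mul_comm s]
  omega

lemma sum_smul_eq_sum_sum_of_stride {R M : Type*} [Semiring R] [AddCommMonoid M] [Module R M]
    {w₁ : Fin k₁ → R} {w₂ : Fin k₂ → R} {v : Fin ((k₂ - 1) * s + k₁) → R}
    (hv : ∀ m : Fin ((k₂ - 1) * s + k₁),
      v m = ∑ j : Fin k₂, ∑ l : Fin k₁, if (j : ℕ) * s + (l : ℕ) = (m : ℕ) then w₂ j * w₁ l else 0)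
    (g : ℕ → M) :
    ∑ m, v m • g m = ∑ j, ∑ l, (w₂ j * w₁ l) • g (j * s + l) := by
  simp only [hv, sum_smul, ite_smul, zero_smul]
  rw [sum_comm]
  refine sum_congr rfl fun j _ => ?_
  rw [sum_comm]
  refine sum_congr rfl fun l _ => ?_
  rw [sum_eq_single ⟨_, mul_stride_add_lt j l⟩]
  · simp
  · intro m _ hm
    rw [if_neg (fun h => hm (Fin.ext h.symm))]
  · simp

end StridedIndex

lemma conv1d_comp (k₁ k₂ s₁ s₂ : ℕ) (w₁ : Fin k₁ → ℝ) (w₂ : Fin k₂ → ℝ) (X : ℕ → ℝ) (i : ℕ) :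
    conv1d k₂ w₂ s₂ (conv1d k₁ w₁ s₁ X) i =
      ∑ j, ∑ l, w₂ j * w₁ l * X (i * (s₁ * s₂) + (j * s₁ + l)) := by
  simp only [conv1d, mul_sum, mul_assoc]
  refine sum_congr rfl fun j _ => sum_congr rfl fun l _ => ?_
  ring_nf

lemma filterPoly_one (k : ℕ) (v : Fin k → ℝ) :
    filterPoly 1 k v = ∑ m, v m • (X 0 ^ (k - 1 - m) * X 1 ^ (m : ℕ)) := by
  simp only [filterPoly, one_mul, smul_eq_C_mul, mul_assoc]

lemma filterPoly_mul_filterPoly_one (k₁ k₂ s : ℕ) (w₁ : Fin k₁ → ℝ) (w₂ : Fin k₂ → ℝ) :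
    filterPoly s k₂ w₂ * filterPoly 1 k₁ w₁ =
      ∑ j, ∑ l, (w₂ j * w₁ l) •
        (X 0 ^ (s * (k₂ - 1 - j) + (k₁ - 1 - l)) * X 1 ^ ((j : ℕ) * s + l)) := by
  simp only [filterPoly, sum_mul_sum, one_mul, smul_eq_C_mul, map_mul, pow_add]
  refine sum_congr rfl fun j _ => sum_congr rfl fun l _ => ?_
  ring

theorem stmt_17_general (k₁ k₂ s₁ s₂ : ℕ)
    (w₁ : Fin k₁ → ℝ) (w₂ : Fin k₂ → ℝ)
    (v : Fin ((k₂ - 1) * s₁ + k₁) → ℝ)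
    (hv : ∀ m : Fin ((k₂ - 1) * s₁ + k₁),
      v m = ∑ j : Fin k₂, ∑ l : Fin k₁,
        if (j : ℕ) * s₁ + (l : ℕ) = (m : ℕ) then w₂ j * w₁ l else 0) :
    (∀ X : ℕ → ℝ, ∀ i : ℕ,
      conv1d k₂ w₂ s₂ (conv1d k₁ w₁ s₁ X) i = conv1d ((k₂ - 1) * s₁ + k₁) v (s₁ * s₂) X i) ∧
    filterPoly 1 ((k₂ - 1) * s₁ + k₁) v = filterPoly s₁ k₂ w₂ * filterPoly 1 k₁ w₁ := by
  constructor
  · intro X i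
    simpa only [conv1d, smul_eq_mul] using
      (conv1d_comp k₁ k₂ s₁ s₂ w₁ w₂ X i).trans
        (sum_smul_eq_sum_sum_of_stride hv fun m => X (i * (s₁ * s₂) + m)).symm
  · rw [filterPoly_one, filterPoly_mul_filterPoly_one,
      sum_smul_eq_sum_sum_of_stride hv fun n => X 0 ^ ((k₂ - 1) * s₁ + k₁ - 1 - n) * X 1 ^ n]
    refine sum_congr rfl fun j _ => sum_congr rfl fun l _ => ?_
    rw [sub_mul_stride_add]

/-- The composition of two 1-D convolutions with filters w₁, w₂ and strides
s₁, s₂ is the convolution of stride s₁s₂ with end-to-end filter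
v_m = Σ_{js₁+l=m} w₂ⱼ w₁ₗ, and π₁(v) = π_{s₁}(w₂)·π₁(w₁). -/
theorem stmt_17 (k₁ k₂ s₁ s₂ : ℕ) (hk₁ : 1 ≤ k₁) (hk₂ : 1 ≤ k₂)
    (w₁ : Fin k₁ → ℝ) (w₂ : Fin k₂ → ℝ)
    (v : Fin ((k₂ - 1) * s₁ + k₁) → ℝ)
    (hv : ∀ m : Fin ((k₂ - 1) * s₁ + k₁),
      v m = ∑ j : Fin k₂, ∑ l : Fin k₁,
        if (j : ℕ) * s₁ + (l : ℕ) = (m : ℕ) then w₂ j * w₁ l else 0) :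
    (∀ X : ℕ → ℝ, ∀ i : ℕ,
      conv1d k₂ w₂ s₂ (conv1d k₁ w₁ s₁ X) i = conv1d ((k₂ - 1) * s₁ + k₁) v (s₁ * s₂) X i) ∧
    filterPoly 1 ((k₂ - 1) * s₁ + k₁) v = filterPoly s₁ k₂ w₂ * filterPoly 1 k₁ w₁ :=
  stmt_17_general k₁ k₂ s₁ s₂ w₁ w₂ v hv
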